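/- Let σ be a density matrix on ℂ²⊗ℂ²⊗ℂ^{d}⊗ℂ^{d'} (factors A,B,A',B') of the block form σ = |00⟩⟨00|⊗A_{0000} + |00⟩⟨11|⊗A_{0011} + |01⟩⟨01|⊗A_{0101} + |01⟩⟨10|⊗A_{0110} + |10⟩⟨01|⊗A_{1001} + |10⟩⟨10|⊗A_{1010} + |11⟩⟨00|⊗A_{1100} + |11⟩⟨11|⊗A_{1111} (all other blocks zero). Then there exists a twisting U = Σ_{i,j∈{0,1}}|ij⟩⟨ij|⊗U^{ij} (with U^{ij} unitary on ℂ^{d}⊗ℂ^{d'}) such that Tr_{A'B'}(U σ U†) is the 4×4 matrix whose diagonal entries are ‖A_{0000}‖₁, ‖A_{0101}‖₁, ‖A_{1010}‖₁, ‖A_{1111}‖₁, whose (|00⟩,|11⟩) and (|11⟩,|00⟩) entries are ‖A_{0011}‖₁ and ‖A_{1100}‖₁, whose (|01⟩,|10⟩) and (|10⟩,|01⟩) entries are ‖A_{0110}‖₁ and ‖A_{1001}‖₁, and all other entries zero. -/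

import Mathlib

open Matrix Kronecker BigOperators
open scoped ComplexOrder Classical

/-- Total matrix square root: `PosSemidef.sqrt` on positive semidefinite matrices,
junk value `0` otherwise. -/
noncomputable def sqrtm {n : Type*} [Fintype n] [DecidableEq n] (M : Matrix n n ℂ) :
    Matrix n n ℂ :=
  if h : M.PosSemidef then
    h.1.eigenvectorUnitary.1 * diagonal ((↑) ∘ (√·) ∘ h.1.eigenvalues) *
      (star h.1.eigenvectorUnitary : Matrix n n ℂ)
  else 0

/-- The trace norm `‖X‖₁ = Tr √(X†X)`. -/
noncomputable def traceNorm {n : Type*} [Fintype n] [DecidableEq n] (X : Matrix n n ℂ) : ℝ :=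
  ((sqrtm (Xᴴ * X)).trace).re

/-- The block `A_{ijkl}` of a matrix on `(ℂ²⊗ℂ²)⊗(ℂ^d⊗ℂ^{d'})`. -/
def blk {dA dB : ℕ}
    (σ : Matrix ((Fin 2 × Fin 2) × (Fin dA × Fin dB)) ((Fin 2 × Fin 2) × (Fin dA × Fin dB)) ℂ)
    (p q : Fin 2 × Fin 2) : Matrix (Fin dA × Fin dB) (Fin dA × Fin dB) ℂ :=
  Matrix.of fun s t => σ (p, s) (q, t)

/-- Partial trace over the second tensor factor. -/
noncomputable def ptrace₂ {α β : Type*} [Fintype β]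
    (M : Matrix (α × β) (α × β) ℂ) : Matrix α α ℂ :=
  Matrix.of fun a a' => ∑ b : β, M (a, b) (a', b)

lemma sqrtm_of_psd {n : Type*} [Fintype n] [DecidableEq n] {M : Matrix n n ℂ}
    (h : M.PosSemidef) : sqrtm M = h.1.eigenvectorUnitary.1 *
      diagonal ((↑) ∘ (√·) ∘ h.1.eigenvalues) *
      (star h.1.eigenvectorUnitary : Matrix n n ℂ) := dif_pos h

open scoped MatrixOrder in
lemma sqrtm_eq_sqrt {n : Type*} [Fintype n] [DecidableEq n] {M : Matrix n n ℂ}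
    (h : M.PosSemidef) : sqrtm M = CFC.sqrt M := by
  have h0 : 0 ≤ M := h.nonneg
  rw [sqrtm_of_psd h, CFC.sqrt_eq_cfc, cfc_nnreal_eq_real _ M, h.1.cfc_eq]
  simp only [IsHermitian.cfc, Unitary.conjStarAlgAut_apply]
  congr 3
  ext i
  simp [Real.coe_sqrt, Real.coe_toNNReal', h.eigenvalues_nonneg i]

open scoped MatrixOrder in
lemma sqrtm_sq_eq {n : Type*} [Fintype n] [DecidableEq n] {M P : Matrix n n ℂ}
    (hP : P.PosSemidef) (hM : P ^ 2 = M) : sqrtm M = P := by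
  have h0 : 0 ≤ P := hP.nonneg
  rw [← hM, sqrtm_eq_sqrt (hP.pow 2), CFC.sqrt_sq P]

open scoped MatrixOrder in
lemma sqrtm_posSemidef_aux {n : Type*} [Fintype n] [DecidableEq n] {M : Matrix n n ℂ}
    (h : M.PosSemidef) : (sqrtm M).PosSemidef := by
  rw [sqrtm_eq_sqrt h]; exact (CFC.sqrt_nonneg M).posSemidef

lemma exists_polar {n : Type*} [Fintype n] [DecidableEq n] (A : Matrix n n ℂ) :
    ∃ U ∈ Matrix.unitaryGroup n ℂ, Uᴴ * A = sqrtm (Aᴴ * A) := by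
  have hpsd : (Aᴴ * A).PosSemidef := posSemidef_conjTranspose_mul_self A
  have hH : (Aᴴ * A).IsHermitian := hpsd.1
  set V : Matrix n n ℂ := (hH.eigenvectorUnitary : Matrix n n ℂ) with hV
  set d : n → ℝ := hH.eigenvalues with hd
  have hdnn : ∀ i, 0 ≤ d i := hpsd.eigenvalues_nonneg
  set B : Matrix n n ℂ := A * V with hB
  have hBB : Bᴴ * B = diagonal (Complex.ofReal ∘ d) := by
    calc Bᴴ * B = star V * (Aᴴ * A) * V := by
          rw [hB, conjTranspose_mul]; rw [Matrix.star_eq_conjTranspose]; noncomm_ring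
      _ = diagonal (Complex.ofReal ∘ d) := by
          have := hH.conjStarAlgAut_star_eigenvectorUnitary
          rwa [Unitary.conjStarAlgAut_star_apply] at this
  -- columns of B as Euclidean vectors
  set c : n → EuclideanSpace ℂ n := fun j => WithLp.toLp 2 (fun x => B x j) with hc
  have hinner : ∀ i j, (inner ℂ (c i) (c j) : ℂ) = if i = j then (d i : ℂ) else 0 := by
    intro i j
    have : (Bᴴ * B) i j = if i = j then (d i : ℂ) else 0 := by
      rw [hBB]; simp [diagonal, diagonal_apply]
    rw [← this]
    simp [PiLp.inner_apply, RCLike.inner_apply, Matrix.mul_apply, conjTranspose_apply, hc,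
      mul_comm]
  set s : Set n := {j | d j ≠ 0} with hs
  set v : n → EuclideanSpace ℂ n := fun j => ((Real.sqrt (d j) : ℂ)⁻¹) • c j with hv'
  have hortho : Orthonormal ℂ (s.restrict v) := by
    rw [orthonormal_iff_ite]
    intro ⟨i, hi⟩ ⟨j, hj⟩
    simp only [Set.restrict, Set.domRestrict_apply, hv', inner_smul_left, inner_smul_right, hinner]
    by_cases hij : i = j
    · subst hij
      have hi' : d i ≠ 0 := hi
      have key : ((Real.sqrt (d i))⁻¹ * ((Real.sqrt (d i))⁻¹ * d i) : ℝ) = 1 := by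
        rw [← mul_assoc, ← mul_inv, Real.mul_self_sqrt (hdnn i), inv_mul_cancel₀ hi']
      simp only [if_pos rfl, Subtype.mk.injEq, if_true, eq_self_iff_true,
        map_inv₀, Complex.conj_ofReal]
      norm_cast
    · simp [hij, Subtype.mk.injEq]
  obtain ⟨b, hb⟩ := hortho.exists_orthonormalBasis_extension_of_card_eq
    (by simp [finrank_euclideanSpace])
  set W : Matrix n n ℂ := Matrix.of (fun x j => b j x) with hW
  have hWinner : ∀ i j, (Wᴴ * W) i j = (inner ℂ (b i) (b j) : ℂ) := by
    intro i j
    simp [Matrix.mul_apply, conjTranspose_apply, hW, PiLp.inner_apply, RCLike.inner_apply, mul_comm]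
  have hWU : W ∈ Matrix.unitaryGroup n ℂ := by
    rw [Matrix.mem_unitaryGroup_iff']
    ext i j
    rw [show star W = Wᴴ from rfl, hWinner, orthonormal_iff_ite.mp b.orthonormal]
    simp [Matrix.one_apply]
  have hczero : ∀ j, d j = 0 → c j = 0 := by
    intro j hj
    have h0 := hinner j j
    rw [if_pos rfl, hj] at h0
    exact inner_self_eq_zero.mp (by rw [h0]; exact Complex.ofReal_zero)
  have hWB : Wᴴ * B = diagonal (Complex.ofReal ∘ Real.sqrt ∘ d) := by
    ext i j
    have hentry : (Wᴴ * B) i j = (inner ℂ (b i) (c j) : ℂ) := by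
      simp [Matrix.mul_apply, conjTranspose_apply, hW, PiLp.inner_apply, RCLike.inner_apply, hc, mul_comm]
    by_cases hj : d j = 0
    · rw [hentry, hczero j hj, inner_zero_right, diagonal_apply]
      rcases eq_or_ne i j with rfl | h
      · simp [Function.comp, hj]
      · simp [h]
    · have hbj : b j = v j := hb j hj
      have : c j = (Real.sqrt (d j) : ℂ) • b j := by
        rw [hbj, hv', smul_smul]
        rw [mul_inv_cancel₀ (by
          simp only [ne_eq, Complex.ofReal_eq_zero]
          exact Real.sqrt_ne_zero'.mpr (lt_of_le_of_ne (hdnn j) (Ne.symm hj)))]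
        simp
      rw [hentry, this, inner_smul_right, orthonormal_iff_ite.mp b.orthonormal, diagonal_apply]
      rcases eq_or_ne i j with rfl | h
      · simp
      · simp [h]
  refine ⟨W * Vᴴ, ?_, ?_⟩
  · exact mul_mem hWU (by exact Unitary.star_mem (hH.eigenvectorUnitary.2) )
  · have hVV : V * Vᴴ = 1 := by
      have := Matrix.mem_unitaryGroup_iff.mp hH.eigenvectorUnitary.2
      rwa [Matrix.star_eq_conjTranspose] at this
    have hsq : sqrtm (Aᴴ * A) = V * diagonal (Complex.ofReal ∘ Real.sqrt ∘ d) * Vᴴ := by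
      rw [sqrtm_of_psd hpsd]
      rfl
    rw [hsq, conjTranspose_mul, conjTranspose_conjTranspose, ← hWB, hB,
      show V * (Wᴴ * (A * V)) * Vᴴ = V * Wᴴ * A * (V * Vᴴ) from by noncomm_ring, hVV, mul_one]

lemma psd_trace_real {n : Type*} [Fintype n] [DecidableEq n] {M : Matrix n n ℂ}
    (h : M.PosSemidef) : ((M.trace.re : ℝ) : ℂ) = M.trace := by
  have him : M.trace.im = 0 := by
    have : star M.trace = M.trace := by
      rw [← Matrix.trace_conjTranspose, h.1.eq]
    have h2 := congrArg Complex.im this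
    simp only [Complex.star_def, Complex.conj_im] at h2
    linarith
  exact Complex.ext (by simp) (by simp [him])

lemma sqrtm_posSemidef {n : Type*} [Fintype n] [DecidableEq n] {M : Matrix n n ℂ}
    (h : M.PosSemidef) : (sqrtm M).PosSemidef := by
  exact sqrtm_posSemidef_aux h

lemma traceNorm_coe {n : Type*} [Fintype n] [DecidableEq n] (X : Matrix n n ℂ) :
    ((traceNorm X : ℝ) : ℂ) = (sqrtm (Xᴴ * X)).trace :=
  psd_trace_real (sqrtm_posSemidef (posSemidef_conjTranspose_mul_self X))

lemma traceNorm_psd {n : Type*} [Fintype n] [DecidableEq n] {M : Matrix n n ℂ}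
    (h : M.PosSemidef) : ((traceNorm M : ℝ) : ℂ) = M.trace := by
  have hMM : Mᴴ * M = M ^ 2 := by rw [h.1.eq, pow_two]
  rw [traceNorm_coe, hMM, sqrtm_sq_eq h rfl]

lemma traceNorm_conjTranspose {n : Type*} [Fintype n] [DecidableEq n] (A : Matrix n n ℂ) :
    traceNorm Aᴴ = traceNorm A := by
  obtain ⟨U, hU, hUA⟩ := exists_polar A
  have hUU : Uᴴ * U = 1 := by
    have := Matrix.mem_unitaryGroup_iff'.mp hU
    rwa [Matrix.star_eq_conjTranspose] at this
  have hA : A = U * sqrtm (Aᴴ * A) := by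
    rw [← hUA, ← mul_assoc, show U * Uᴴ = 1 from ?_, one_mul]
    have := Matrix.mem_unitaryGroup_iff.mp hU
    rwa [Matrix.star_eq_conjTranspose] at this
  set P := sqrtm (Aᴴ * A) with hP
  have hPpsd : P.PosSemidef := sqrtm_posSemidef (posSemidef_conjTranspose_mul_self A)
  have hAAH : Aᴴᴴ * Aᴴ = (U * P * Uᴴ) ^ 2 := by
    rw [conjTranspose_conjTranspose]
    rw [hA, pow_two, conjTranspose_mul, hPpsd.1.eq]
    calc U * P * (P * Uᴴ) = U * P * (Uᴴ * U) * (P * Uᴴ) := by rw [hUU, mul_one]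
      _ = U * P * Uᴴ * (U * P * Uᴴ) := by noncomm_ring
  have hconj : (U * P * Uᴴ).PosSemidef := hPpsd.mul_mul_conjTranspose_same U
  have : sqrtm (Aᴴᴴ * Aᴴ) = U * P * Uᴴ := by
    exact sqrtm_sq_eq hconj hAAH.symm
  unfold traceNorm
  rw [this, Matrix.trace_mul_cycle, hUU, one_mul]

open Kronecker in
lemma twist_apply {dA dB : ℕ} (U : Fin 2 × Fin 2 → Matrix (Fin dA × Fin dB) (Fin dA × Fin dB) ℂ)
    (M : Matrix ((Fin 2 × Fin 2) × (Fin dA × Fin dB)) ((Fin 2 × Fin 2) × (Fin dA × Fin dB)) ℂ)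
    (p q : Fin 2 × Fin 2) (s t : Fin dA × Fin dB) :
    ((∑ ij : Fin 2 × Fin 2, Matrix.single ij ij (1:ℂ) ⊗ₖ U ij) * M *
      (∑ ij : Fin 2 × Fin 2, Matrix.single ij ij (1:ℂ) ⊗ₖ U ij)ᴴ) (p,s) (q,t)
      = (U p * blk M p q * (U q)ᴴ) s t := by
  set T := ∑ ij : Fin 2 × Fin 2, Matrix.single ij ij (1:ℂ) ⊗ₖ U ij with hTdef
  have hT : ∀ (r : Fin 2 × Fin 2) (w : Fin dA × Fin dB) (r' : Fin 2 × Fin 2)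
      (w' : Fin dA × Fin dB), T (r,w) (r',w') = if r = r' then U r w w' else 0 := by
    intro r w r' w'
    rw [hTdef, Matrix.sum_apply]
    simp only [kroneckerMap_apply, Matrix.single, Matrix.of_apply, ite_mul, one_mul,
      zero_mul]
    rw [Finset.sum_eq_single r]
    · by_cases h : r = r' <;> simp [h]
    · intro b _ hb
      rw [if_neg (by rintro ⟨hbr, -⟩; exact hb hbr)]
    · simp
  have h1 : ∀ w, (T * M) (p,s) w = ∑ u, U p s u * M (p,u) w := by
    intro w
    rw [Matrix.mul_apply, Fintype.sum_prod_type, Finset.sum_eq_single p]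
    · simp [hT]
    · intro r _ hr
      simp [hT, Ne.symm hr]
    · simp
  rw [Matrix.mul_apply, Fintype.sum_prod_type, Finset.sum_eq_single q]
  · simp only [Matrix.conjTranspose_apply, hT, h1, if_pos rfl]
    simp [Matrix.mul_apply, blk, Finset.sum_mul, Matrix.conjTranspose_apply,
      mul_comm, mul_assoc, mul_left_comm]
  · intro r _ hr
    simp [Matrix.conjTranspose_apply, hT, Ne.symm hr]
  · simp

set_option maxHeartbeats 2000000
/-- if the density matrix `σ` on `ℂ²⊗ℂ²⊗ℂ^d⊗ℂ^{d'}` has nonzero blocks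
only on the diagonal (`p = q`) and the antidiagonal (`p.1 ≠ q.1 ∧ p.2 ≠ q.2`), then
there is a twisting `U = Σ_{ij}|ij⟩⟨ij|⊗U^{ij}` such that `Tr_{A'B'}(UσU†)` is the 4×4
matrix whose entries at those positions are the trace norms of the corresponding blocks,
and which vanishes elsewhere. -/
theorem exists_twisting_ptrace_eq_traceNorms {dA dB : ℕ}
    (σ : Matrix ((Fin 2 × Fin 2) × (Fin dA × Fin dB)) ((Fin 2 × Fin 2) × (Fin dA × Fin dB)) ℂ)
    (hσ : σ.PosSemidef) (hσtr : σ.trace = 1)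
    (hblocks : ∀ p q : Fin 2 × Fin 2,
      ¬(p = q ∨ (p.1 ≠ q.1 ∧ p.2 ≠ q.2)) → blk σ p q = 0) :
    ∃ Uij : Fin 2 × Fin 2 → Matrix (Fin dA × Fin dB) (Fin dA × Fin dB) ℂ,
      (∀ ij, Uij ij ∈ Matrix.unitaryGroup (Fin dA × Fin dB) ℂ) ∧
      ptrace₂
          ((∑ ij : Fin 2 × Fin 2, Matrix.single ij ij (1 : ℂ) ⊗ₖ Uij ij) * σ *
            (∑ ij : Fin 2 × Fin 2, Matrix.single ij ij (1 : ℂ) ⊗ₖ Uij ij)ᴴ)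
        = Matrix.of (fun p q : Fin 2 × Fin 2 =>
            if p = q ∨ (p.1 ≠ q.1 ∧ p.2 ≠ q.2) then (traceNorm (blk σ p q) : ℂ) else 0) := by
  classical
  obtain ⟨W₁, hW₁, hW₁A⟩ := exists_polar (blk σ (0,0) (1,1))
  obtain ⟨W₂, hW₂, hW₂A⟩ := exists_polar (blk σ (0,1) (1,0))
  set Uij : Fin 2 × Fin 2 → Matrix (Fin dA × Fin dB) (Fin dA × Fin dB) ℂ := fun ij =>
    if ij = (0,0) then W₁ᴴ else if ij = (0,1) then W₂ᴴ else 1 with hUdef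
  have hU00 : Uij (0,0) = W₁ᴴ := by rw [hUdef]; dsimp only; rw [if_pos rfl]
  have hU01 : Uij (0,1) = W₂ᴴ := by
    rw [hUdef]; dsimp only; rw [if_neg (by decide), if_pos rfl]
  have hU10 : Uij (1,0) = 1 := by
    rw [hUdef]; dsimp only; rw [if_neg (by decide), if_neg (by decide)]
  have hU11 : Uij (1,1) = 1 := by
    rw [hUdef]; dsimp only; rw [if_neg (by decide), if_neg (by decide)]
  have hUmem : ∀ ij, Uij ij ∈ Matrix.unitaryGroup (Fin dA × Fin dB) ℂ := by
    intro ij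
    rw [hUdef]
    dsimp only
    split_ifs with h1 h2
    · exact Unitary.star_mem hW₁
    · exact Unitary.star_mem hW₂
    · exact one_mem _
  refine ⟨Uij, hUmem, ?_⟩
  have hAherm : ∀ p q : Fin 2 × Fin 2, blk σ q p = (blk σ p q)ᴴ := by
    intro p q
    ext s' t'
    show σ (q, s') (p, t') = star (σ (p, t') (q, s'))
    conv_lhs => rw [← hσ.1.eq]
    rfl
  have key : ∀ p q : Fin 2 × Fin 2,
      ptrace₂
          ((∑ ij : Fin 2 × Fin 2, Matrix.single ij ij (1 : ℂ) ⊗ₖ Uij ij) * σ *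
            (∑ ij : Fin 2 × Fin 2, Matrix.single ij ij (1 : ℂ) ⊗ₖ Uij ij)ᴴ) p q
        = (Uij p * blk σ p q * (Uij q)ᴴ).trace := by
    intro p q
    simp only [ptrace₂, Matrix.of_apply]
    rw [Matrix.trace]
    refine Finset.sum_congr rfl fun b _ => ?_
    exact twist_apply Uij σ p q b b
  have hzero : ∀ p q : Fin 2 × Fin 2, blk σ p q = 0 →
      (Uij p * blk σ p q * (Uij q)ᴴ).trace = 0 := by
    intro p q h
    rw [h, mul_zero, zero_mul, Matrix.trace_zero]
  have hdiag : ∀ p : Fin 2 × Fin 2,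
      (Uij p * blk σ p p * (Uij p)ᴴ).trace = (traceNorm (blk σ p p) : ℂ) := by
    intro p
    have hpsd : (blk σ p p).PosSemidef := hσ.submatrix (fun s => (p, s))
    have hU : (Uij p)ᴴ * Uij p = 1 := by
      have := Matrix.mem_unitaryGroup_iff'.mp (hUmem p)
      rwa [Matrix.star_eq_conjTranspose] at this
    rw [Matrix.trace_mul_cycle, hU, one_mul, traceNorm_psd hpsd]
  have h0011 : (Uij (0,0) * blk σ (0,0) (1,1) * (Uij (1,1))ᴴ).trace
      = (traceNorm (blk σ (0,0) (1,1)) : ℂ) := by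
    rw [hU00, hU11, conjTranspose_one, mul_one, hW₁A, traceNorm_coe]
  have h0110 : (Uij (0,1) * blk σ (0,1) (1,0) * (Uij (1,0))ᴴ).trace
      = (traceNorm (blk σ (0,1) (1,0)) : ℂ) := by
    rw [hU01, hU10, conjTranspose_one, mul_one, hW₂A, traceNorm_coe]
  have hback : ∀ (A W : Matrix (Fin dA × Fin dB) (Fin dA × Fin dB) ℂ),
      Wᴴ * A = sqrtm (Aᴴ * A) →
      (1 * Aᴴ * (Wᴴ)ᴴ).trace = (traceNorm Aᴴ : ℂ) := by
    intro A W hWA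
    rw [one_mul, conjTranspose_conjTranspose, traceNorm_conjTranspose,
      show Aᴴ * W = (Wᴴ * A)ᴴ from by rw [conjTranspose_mul, conjTranspose_conjTranspose],
      Matrix.trace_conjTranspose, hWA, ← traceNorm_coe A]
    exact Complex.conj_ofReal _
  have h1100 : (Uij (1,1) * blk σ (1,1) (0,0) * (Uij (0,0))ᴴ).trace
      = (traceNorm (blk σ (1,1) (0,0)) : ℂ) := by
    rw [hU11, hU00, hAherm (0,0) (1,1)]
    exact hback _ _ hW₁A
  have h1001 : (Uij (1,0) * blk σ (1,0) (0,1) * (Uij (0,1))ᴴ).trace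
      = (traceNorm (blk σ (1,0) (0,1)) : ℂ) := by
    rw [hU10, hU01, hAherm (0,1) (1,0)]
    exact hback _ _ hW₂A
  ext p q
  rw [key, Matrix.of_apply]
  fin_cases p <;> fin_cases q
  · rw [if_pos (by decide)]
    exact hdiag _
  · rw [if_neg (by decide)]
    exact hzero _ _ (hblocks _ _ (by decide))
  · rw [if_neg (by decide)]
    exact hzero _ _ (hblocks _ _ (by decide))
  · rw [if_pos (by decide)]
    exact h0011
  · rw [if_neg (by decide)]
    exact hzero _ _ (hblocks _ _ (by decide))
  · rw [if_pos (by decide)]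
    exact hdiag _
  · rw [if_pos (by decide)]
    exact h0110
  · rw [if_neg (by decide)]
    exact hzero _ _ (hblocks _ _ (by decide))
  · rw [if_neg (by decide)]
    exact hzero _ _ (hblocks _ _ (by decide))
  · rw [if_pos (by decide)]
    exact h1001
  · rw [if_pos (by decide)]
    exact hdiag _
  · rw [if_neg (by decide)]
    exact hzero _ _ (hblocks _ _ (by decide))
  · rw [if_pos (by decide)]
    exact h1100
  · rw [if_neg (by decide)]
    exact hzero _ _ (hblocks _ _ (by decide))
  · rw [if_neg (by decide)]
    exact hzero _ _ (hblocks _ _ (by decide))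
  · rw [if_pos (by decide)]
    exact hdiag _
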